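/- Let α₀ = {(i,j) ∈ Δ : i < j}. The group homomorphism St_n(R)_{α₀} → GL_n(R) sending each generator x_ij(r) to the elementary matrix ε_ij(r) is injective, and its image is T_n(R), the group of upper unitriangular n×n matrices over R (1's on the diagonal, 0's below the diagonal). Hence St_n(R)_{α₀} ≅ T_n(R): the unitriangular group is presented by the generators x_ij(r) (i < j, r ∈ R) subject to the Steinberg relations. -/

import Mathlib

/-- The elementary matrix `ε_{ij}(r)`. -/
def elemMat {n : ℕ} {R : Type*} [Ring R] (i j : Fin n) (r : R) :
    Matrix (Fin n) (Fin n) R :=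
  1 + Matrix.single i j r

/-- The elementary matrix `ε_{ij}(r)` as a unit (invertible matrix) for `i ≠ j`. -/
def elemUnit {n : ℕ} {R : Type*} [Ring R] (i j : Fin n) (hij : i ≠ j) (r : R) :
    (Matrix (Fin n) (Fin n) R)ˣ where
  val := elemMat i j r
  inv := elemMat i j (-r)
  val_inv := by
    have h0 : Matrix.single i j r * Matrix.single i j (-r) = 0 :=
      Matrix.single_mul_single_of_ne (h := hij.symm) ..
    simp [elemMat, mul_add, add_mul, h0, ← Matrix.single_add, add_assoc]
  inv_val := by
    have h0 : Matrix.single i j (-r) * Matrix.single i j r = 0 :=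
      Matrix.single_mul_single_of_ne (h := hij.symm) ..
    simp [elemMat, mul_add, add_mul, h0, ← Matrix.single_add, add_assoc]

open scoped commutatorElement

/-- The Steinberg relations on the generators `x_{ij}(r)`, `(i,j) ∈ α`, `r ∈ R`:
`St1 : x_{ij}(a) x_{ij}(b) = x_{ij}(a+b)`;
`St2 : ⁅x_{ij}(a), x_{kl}(b)⁆ = 1` if `j ≠ k`, `i ≠ l`, and
`⁅x_{ij}(a), x_{jl}(b)⁆ = x_{il}(ab)` if `i ≠ l`.
The hypothesis `hc` guarantees that the position `(i,l)` appearing in the last relation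
again belongs to `α`. -/
def stRels (n : ℕ) (R : Type*) [Ring R] (α : Set (Fin n × Fin n))
    (hc : ∀ i j k : Fin n, (i, j) ∈ α → (j, k) ∈ α → i ≠ k → (i, k) ∈ α) :
    Set (FreeGroup ({p : Fin n × Fin n // p ∈ α} × R)) :=
  {w | ∃ (p : {p : Fin n × Fin n // p ∈ α}) (a b : R),
      w = FreeGroup.of (p, a) * FreeGroup.of (p, b) * (FreeGroup.of (p, a + b))⁻¹} ∪
  {w | ∃ (p q : {p : Fin n × Fin n // p ∈ α}) (a b : R),
      p.1.2 ≠ q.1.1 ∧ p.1.1 ≠ q.1.2 ∧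
      w = ⁅FreeGroup.of (p, a), FreeGroup.of (q, b)⁆} ∪
  {w | ∃ (p q : {p : Fin n × Fin n // p ∈ α}) (a b : R) (h : p.1.2 = q.1.1)
      (hil : p.1.1 ≠ q.1.2),
      w = ⁅FreeGroup.of (p, a), FreeGroup.of (q, b)⁆ *
        (FreeGroup.of
          (⟨(p.1.1, q.1.2), hc p.1.1 p.1.2 q.1.2 p.2 (by rw [h]; exact q.2) hil⟩, a * b))⁻¹}

/-- The set `α₀ = {(i,j) : i < j}` of strictly upper triangular positions. -/
def ltSet (n : ℕ) : Set (Fin n × Fin n) := {p | p.1 < p.2}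

/-- `St_n(R)_{α₀}`: the group presented by generators `x_{ij}(r)` with `i < j` subject to the
Steinberg relations. -/
abbrev SteinbergUpper (n : ℕ) (R : Type*) [Ring R] :=
  PresentedGroup (stRels n R (ltSet n) (fun i j k hij hjk _ => show (i, k) ∈ ltSet n from lt_trans (show i < j from hij) (show j < k from hjk)))

/-!
Every element of `St_n(R)_{α₀}` has the normal form `∏_{j = n-1}^{0} ∏_{i < j} x_ij(a_ij)`:
the generators of one column commute, so a column is a homomorphic image of `Rⁿ`, and
left multiplication by `x_kl(b)` moves through the columns `j > l`, where the commutator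
relation only adds `b * a_lj` to `a_kj`, until it is absorbed by column `l`. Since two columns
`j' ≤ j` of strictly upper triangular entries multiply to zero, the normal form maps to the
unitriangular matrix with entries `a_ij` above the diagonal; this map is inverted by reading off
the entries, so the homomorphism is injective with image `T_n(R)`.
-/

open Matrix

theorem List.prod_map_one_add_of_pairwise_mul_eq_zero {ι M : Type*} [Semiring M] (N : ι → M)
    {l : List ι} (hl : l.Pairwise fun a b => N a * N b = 0) :
    (l.map fun a => 1 + N a).prod = 1 + (l.map N).sum := by
  induction l with
  | nil => simp
  | cons a l ih =>
    rw [List.pairwise_cons] at hl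
    have hzero : N a * (l.map N).sum = 0 := by
      rw [← List.sum_map_mul_left]
      exact List.sum_eq_zero fun x hx => by
        obtain ⟨b, hb, rfl⟩ := List.mem_map.mp hx
        exact hl.1 b hb
    rw [List.map_cons, List.prod_cons, ih hl.2, List.map_cons, List.sum_cons, add_mul, one_mul,
      mul_add, mul_one, hzero, add_zero]
    abel

section ElementaryMatrix

variable {n : ℕ} {R : Type*} [Ring R]

theorem elemUnit_mul_elemUnit {i j : Fin n} (h : i ≠ j) (a b : R) :
    elemUnit i j h a * elemUnit i j h b = elemUnit i j h (a + b) := by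
  ext1
  simp [elemUnit, elemMat, mul_add, add_mul, h.symm, single_add, add_assoc]

theorem commute_elemUnit {i j k l : Fin n} (hij : i ≠ j) (hkl : k ≠ l) (hjk : j ≠ k)
    (hil : i ≠ l) (a b : R) : Commute (elemUnit i j hij a) (elemUnit k l hkl b) := by
  refine Units.ext ?_
  simp only [elemUnit, elemMat, Units.val_mul, mul_add, mul_one, add_mul, one_mul,
    single_mul_single_of_ne, hjk, hil.symm, ne_eq, not_false_eq_true, add_zero]
  abel

theorem commutatorElement_elemUnit {i j l : Fin n} (hij : i ≠ j) (hjl : j ≠ l) (hil : i ≠ l)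
    (a b : R) : ⁅elemUnit i j hij a, elemUnit j l hjl b⁆ = elemUnit i l hil (a * b) := by
  have key : elemUnit i j hij a * elemUnit j l hjl b =
      elemUnit i l hil (a * b) * (elemUnit j l hjl b * elemUnit i j hij a) := by
    ext1
    simp only [elemUnit, elemMat, Units.val_mul, mul_add, mul_one, add_mul, one_mul,
      single_mul_single_same, single_mul_single_of_ne, hil.symm, hjl.symm, ne_eq,
      not_false_eq_true, add_zero]
    abel
  rw [commutatorElement_def, key]
  group

end ElementaryMatrix

namespace SteinbergUpper

variable {n : ℕ} {R : Type*} [Ring R]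

def gen (i j : Fin n) (h : i < j) (r : R) : SteinbergUpper n R :=
  PresentedGroup.of (⟨(i, j), h⟩, r)

variable {i j k l : Fin n}

theorem gen_mul_gen (h : i < j) (a b : R) : gen i j h a * gen i j h b = gen i j h (a + b) :=
  PresentedGroup.mk_eq_mk_of_mul_inv_mem (Or.inl (Or.inl ⟨⟨(i, j), h⟩, a, b, rfl⟩))

theorem commute_gen (hij : i < j) (hkl : k < l) (hjk : j ≠ k) (hil : i ≠ l) (a b : R) :
    Commute (gen i j hij a) (gen k l hkl b) :=
  commutatorElement_eq_one_iff_commute.mp <|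
    PresentedGroup.one_of_mem
      (Or.inl (Or.inr ⟨⟨(i, j), hij⟩, ⟨(k, l), hkl⟩, a, b, hjk, hil, rfl⟩))

theorem commutatorElement_gen (hij : i < j) (hjl : j < l) (a b : R) :
    ⁅gen i j hij a, gen j l hjl b⁆ = gen i l (hij.trans hjl) (a * b) :=
  PresentedGroup.mk_eq_mk_of_mul_inv_mem
    (Or.inr ⟨⟨(i, j), hij⟩, ⟨(j, l), hjl⟩, a, b, rfl, (hij.trans hjl).ne, rfl⟩)

theorem gen_zero (h : i < j) : gen i j h (0 : R) = 1 := by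
  simpa using gen_mul_gen h (0 : R) 0

theorem inv_gen (h : i < j) (a : R) : (gen i j h a)⁻¹ = gen i j h (-a) :=
  inv_eq_of_mul_eq_one_right (by rw [gen_mul_gen, add_neg_cancel, gen_zero])

variable (n R) in
def toGL : SteinbergUpper n R →* (Matrix (Fin n) (Fin n) R)ˣ :=
  PresentedGroup.toGroup (f := fun g => elemUnit g.1.1.1 g.1.1.2 (ne_of_lt g.1.2) g.2) <| by
    rintro r ((⟨p, a, b, rfl⟩ | ⟨p, q, a, b, hjk, hil, rfl⟩) |
      ⟨⟨⟨i, j⟩, hij⟩, ⟨⟨j', l⟩, hjl⟩, a, b, hj, hil, rfl⟩)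
    · simp [elemUnit_mul_elemUnit]
    · simpa using commutatorElement_eq_one_iff_commute.mpr (commute_elemUnit _ _ hjk hil a b)
    · obtain rfl : j = j' := hj
      simp [commutatorElement_elemUnit _ _ hil]

theorem toGL_gen (h : i < j) (r : R) : toGL n R (gen i j h r) = elemUnit i j h.ne r :=
  PresentedGroup.toGroup.of _

-- Trivial for `i ≥ j`, so that a column can be indexed by all of `Fin n`.
def genHom (i j : Fin n) : Multiplicative R →* SteinbergUpper n R :=
  if h : i < j then
    { toFun := fun a => gen i j h a.toAdd
      map_one' := gen_zero h
      map_mul' := fun a b => (gen_mul_gen h a.toAdd b.toAdd).symm }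
  else 1

theorem genHom_of_lt (h : i < j) (a : R) : genHom i j (.ofAdd a) = gen i j h a := by
  simp [genHom, h]

theorem genHom_of_not_lt (h : ¬i < j) (a : Multiplicative R) : genHom i j a = 1 := by
  simp [genHom, h]

theorem commute_genHom (i i' j : Fin n) (a b : Multiplicative R) :
    Commute (genHom i j a) (genHom i' j b) := by
  by_cases hi : i < j
  · by_cases hi' : i' < j
    · rw [← ofAdd_toAdd a, ← ofAdd_toAdd b, genHom_of_lt hi, genHom_of_lt hi']
      exact commute_gen hi hi' hi'.ne' hi.ne _ _
    · rw [genHom_of_not_lt hi']; exact Commute.one_right _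
  · rw [genHom_of_not_lt hi]; exact Commute.one_left _

theorem pairwise_commute_genHom (j : Fin n) :
    Pairwise fun i i' => ∀ a b : Multiplicative R, Commute (genHom i j a) (genHom i' j b) :=
  fun i i' _ => commute_genHom i i' j

def columnHom (j : Fin n) : (Fin n → Multiplicative R) →* SteinbergUpper n R :=
  MonoidHom.noncommPiCoprod (fun i => genHom i j) (pairwise_commute_genHom j)

def column (j : Fin n) (v : Fin n → R) : SteinbergUpper n R :=
  columnHom j fun i => .ofAdd (v i)

theorem column_add (j : Fin n) (v w : Fin n → R) :
    column j (v + w) = column j v * column j w :=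
  map_mul (columnHom j) _ _

theorem column_zero (j : Fin n) : column j (0 : Fin n → R) = 1 :=
  map_one (columnHom j)

theorem column_single (h : i < j) (r : R) : column j (Pi.single i r) = gen i j h r := by
  have : (fun i' => Multiplicative.ofAdd ((Pi.single i r : Fin n → R) i')) =
      (Pi.mulSingle i (.ofAdd r) : Fin n → Multiplicative R) :=
    funext fun i' => (Pi.mulSingle_multiplicativeOfAdd_eq (M := fun _ => R) i r i').symm
  rw [column, this, columnHom, MonoidHom.noncommPiCoprod_mulSingle, genHom_of_lt h]

theorem column_congr {v w : Fin n → R} (h : ∀ i < j, v i = w i) : column j v = column j w := by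
  simp only [column, columnHom, MonoidHom.noncommPiCoprod_apply]
  apply Finset.noncommProd_congr rfl
  intro i _
  by_cases hi : i < j
  · rw [h i hi]
  · rw [genHom_of_not_lt hi, genHom_of_not_lt hi]

theorem commute_column {y : SteinbergUpper n R} {v : Fin n → R}
    (h : ∀ i (hi : i < j), Commute y (gen i j hi (v i))) : Commute y (column j v) := by
  rw [column, columnHom, MonoidHom.noncommPiCoprod_apply]
  refine Finset.noncommProd_commute _ _ _ _ fun i _ => ?_
  by_cases hi : i < j
  · rw [genHom_of_lt hi]; exact h i hi
  · rw [genHom_of_not_lt hi]; exact Commute.one_right y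

theorem gen_mul_column_self (hkl : k < l) (b : R) (v : Fin n → R) :
    gen k l hkl b * column l v = column l (Pi.single k b + v) := by
  rw [← column_single hkl, column_add]

-- `x_kl(b)` commutes with every factor of column `j` except `x_lj(v l)`, and
-- `⁅x_kl(b), x_lj(a)⁆ = x_kj(b * a)` is a factor of column `j` again.
theorem gen_mul_column_of_lt (hkl : k < l) (hlj : l < j) (b : R) (v : Fin n → R) :
    gen k l hkl b * column j v = column j (Pi.single k (b * v l) + v) * gen k l hkl b := by
  set w := Function.update v l 0
  have hv : v = Pi.single l (v l) + w := by
    ext i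
    by_cases hi : i = l
    · subst hi; simp [w]
    · simp [w, hi]
  have hcomm : Commute (gen k l hkl b) (column j w) := commute_column fun i hi => by
    by_cases hil : i = l
    · subst hil; simp only [w, Function.update_self, gen_zero]; exact Commute.one_right _
    · exact commute_gen hkl hi (Ne.symm hil) (hkl.trans hlj).ne _ _
  have hconj : gen k l hkl b * gen l j hlj (v l) =
      gen k j (hkl.trans hlj) (b * v l) * gen l j hlj (v l) * gen k l hkl b := by
    rw [← commutatorElement_gen hkl hlj, commutatorElement_def]
    group
  calc gen k l hkl b * column j v
      = gen k l hkl b * gen l j hlj (v l) * column j w := by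
        rw [mul_assoc, ← column_single hlj, ← column_add, ← hv]
    _ = column j (Pi.single k (b * v l)) * (gen l j hlj (v l) * column j w) * gen k l hkl b := by
        rw [hconj, column_single (hkl.trans hlj), mul_assoc _ _ (column j w), hcomm.eq]
        simp only [mul_assoc]
    _ = column j (Pi.single k (b * v l) + v) * gen k l hkl b := by
        rw [← column_single hlj, ← column_add, ← hv, column_add]

def unitriangularPart (A : Matrix (Fin n) (Fin n) R) : Matrix (Fin n) (Fin n) R :=
  of fun i j => if i = j then 1 else if i < j then A i j else 0

theorem unitriangularPart_eq_self {A : Matrix (Fin n) (Fin n) R} (hdiag : ∀ k, A k k = 1)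
    (hlower : ∀ k l, l < k → A k l = 0) : unitriangularPart A = A := by
  ext a b
  rcases lt_trichotomy a b with hab | rfl | hab
  · simp [unitriangularPart, hab, hab.ne]
  · simp [unitriangularPart, hdiag]
  · simp [unitriangularPart, hab.ne', hab.not_gt, hlower a b hab]

def columnProd (A : Matrix (Fin n) (Fin n) R) (L : List (Fin n)) : SteinbergUpper n R :=
  (L.map fun j => column j (Aᵀ j)).prod

def normalForm (A : Matrix (Fin n) (Fin n) R) : SteinbergUpper n R :=
  columnProd A (List.finRange n).reverse

theorem transpose_add_single_mul_apply (A B : Matrix (Fin n) (Fin n) R) (k l j : Fin n) (b : R) :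
    (A + single k l b * B)ᵀ j = Pi.single k (b * B l j) + Aᵀ j := by
  ext i
  by_cases hi : i = k
  · subst hi; simp [single_mul_apply_same, add_comm]
  · simp [single_mul_apply_of_ne _ _ _ _ _ hi, hi]

theorem gen_mul_columnProd (hkl : k < l) (b : R) (A : Matrix (Fin n) (Fin n) R)
    {L : List (Fin n)} (hL : L.Pairwise (· > ·)) (hl : l ∈ L) :
    gen k l hkl b * columnProd A L = columnProd (A + single k l b * unitriangularPart A) L := by
  induction L with
  | nil => simp at hl
  | cons j L ih =>
    rw [List.pairwise_cons] at hL
    simp only [columnProd, List.map_cons, List.prod_cons, transpose_add_single_mul_apply] at ih ⊢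
    rcases List.mem_cons.mp hl with rfl | hl
    · have hrest : ∀ j ∈ L, column j (Pi.single k (b * unitriangularPart A l j) + Aᵀ j) =
          column j (Aᵀ j) := fun j hj => by
        simp [unitriangularPart, (hL.1 j hj).ne', (hL.1 j hj).not_gt]
      rw [← mul_assoc, gen_mul_column_self, List.map_congr_left hrest]
      simp [unitriangularPart]
    · have hlj : l < j := hL.1 l hl
      rw [← mul_assoc, gen_mul_column_of_lt hkl hlj, mul_assoc, ih hL.2 hl]
      simp [unitriangularPart, hlj.ne, hlj]

-- Above the diagonal, the new coordinates are the entries of `ε_kl(b) * unitriangularPart A`.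
theorem gen_mul_normalForm (hkl : k < l) (b : R) (A : Matrix (Fin n) (Fin n) R) :
    gen k l hkl b * normalForm A = normalForm (A + single k l b * unitriangularPart A) :=
  gen_mul_columnProd hkl b A (List.pairwise_reverse.mpr (List.pairwise_lt_finRange n))
    (by simp)

theorem normalForm_zero : normalForm (0 : Matrix (Fin n) (Fin n) R) = 1 := by
  refine List.prod_eq_one fun _ hx => ?_
  obtain ⟨j, -, rfl⟩ := List.mem_map.mp hx
  exact column_zero j

theorem exists_normalForm (g : SteinbergUpper n R) : ∃ A, g = normalForm A := by
  have hg : g ∈ Subgroup.closure (Set.range PresentedGroup.of) := by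
    rw [PresentedGroup.closure_range_of]; exact Subgroup.mem_top g
  induction hg using Subgroup.closure_induction_left with
  | one => exact ⟨0, normalForm_zero.symm⟩
  | mul_left x hx y _ ih =>
    obtain ⟨⟨⟨⟨k, l⟩, hkl⟩, r⟩, rfl⟩ := hx
    obtain ⟨A, rfl⟩ := ih
    exact ⟨_, gen_mul_normalForm hkl r A⟩
  | inv_mul_cancel x hx y _ ih =>
    obtain ⟨⟨⟨⟨k, l⟩, hkl⟩, r⟩, rfl⟩ := hx
    obtain ⟨A, rfl⟩ := ih
    exact ⟨_, (congrArg (· * normalForm A) (inv_gen hkl r)).trans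
      (gen_mul_normalForm hkl (-r) A)⟩

theorem normalForm_unitriangularPart (A : Matrix (Fin n) (Fin n) R) :
    normalForm (unitriangularPart A) = normalForm A := by
  simp only [normalForm, columnProd]
  congr 2
  ext j
  exact column_congr fun i hi => by simp [unitriangularPart, hi.ne, hi]

def columnMatrix (j : Fin n) (v : Fin n → R) : Matrix (Fin n) (Fin n) R :=
  of fun a b => if b = j ∧ a < j then v a else 0

theorem columnMatrix_mul_columnMatrix {j j' : Fin n} (h : j' ≤ j) (v w : Fin n → R) :
    columnMatrix j v * columnMatrix j' w = 0 := by
  ext a b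
  simp only [columnMatrix, mul_apply, of_apply, Matrix.zero_apply]
  refine Finset.sum_eq_zero fun c _ => ?_
  by_cases hc : c = j
  · subst hc; simp [h.not_gt]
  · simp [hc]

theorem columnMatrix_add (j : Fin n) (v w : Fin n → R) :
    columnMatrix j (v + w) = columnMatrix j v + columnMatrix j w := by
  ext a b
  simp only [columnMatrix, of_apply, Matrix.add_apply, Pi.add_apply]
  split_ifs <;> simp

theorem columnMatrix_single (h : i < j) (r : R) :
    columnMatrix j (Pi.single i r) = single i j r := by
  ext a b
  by_cases ha : a = i
  · subst ha; by_cases hb : b = j <;> simp [columnMatrix, single_apply, h, hb, eq_comm]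
  · simp [columnMatrix, ha, Ne.symm ha]

theorem columnMatrix_single_of_not_lt (h : ¬i < j) (r : R) :
    columnMatrix j (Pi.single i r) = 0 := by
  ext a b
  by_cases ha : a = i
  · subst ha; simp [columnMatrix, h]
  · simp [columnMatrix, ha]

variable (R) in
def columnMatrixHom (j : Fin n) : (Fin n → Multiplicative R) →* Matrix (Fin n) (Fin n) R where
  toFun v := 1 + columnMatrix j fun i => (v i).toAdd
  map_one' := by ext; simp [columnMatrix]
  map_mul' v w := by
    simp only [add_mul, mul_add, one_mul, mul_one, columnMatrix_mul_columnMatrix le_rfl, add_zero]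
    rw [add_assoc, ← columnMatrix_add]
    rfl

theorem toGL_column (j : Fin n) (v : Fin n → R) :
    (toGL n R (column j v) : Matrix (Fin n) (Fin n) R) = 1 + columnMatrix j v := by
  have : (Units.coeHom _).comp ((toGL n R).comp (columnHom j)) = columnMatrixHom R j := by
    refine MonoidHom.pi_ext fun i a => ?_
    have hsingle :
        (fun i' => ((Pi.mulSingle i a : Fin n → Multiplicative R) i').toAdd) =
          Pi.single i a.toAdd :=
      funext fun i' => Pi.mulSingle_multiplicativeOfAdd_eq (M := fun _ => R) i a.toAdd i'
    simp only [MonoidHom.comp_apply, columnHom, MonoidHom.noncommPiCoprod_mulSingle,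
      columnMatrixHom, MonoidHom.coe_mk, OneHom.coe_mk, hsingle]
    by_cases h : i < j
    · rw [← ofAdd_toAdd a, genHom_of_lt h, toGL_gen, columnMatrix_single h]; rfl
    · rw [genHom_of_not_lt h, columnMatrix_single_of_not_lt h]; simp
  exact DFunLike.congr_fun this _

theorem toGL_normalForm (A : Matrix (Fin n) (Fin n) R) :
    (toGL n R (normalForm A) : Matrix (Fin n) (Fin n) R) = unitriangularPart A := by
  have hprod : (toGL n R (normalForm A) : Matrix (Fin n) (Fin n) R) =
      ((List.finRange n).reverse.map fun j => 1 + columnMatrix j (Aᵀ j)).prod := by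
    rw [normalForm, columnProd, ← Units.coeHom_apply, ← MonoidHom.comp_apply, map_list_prod,
      List.map_map]
    exact congrArg _ (List.map_congr_left fun j _ => toGL_column j _)
  have hpairwise : (List.finRange n).reverse.Pairwise fun j j' =>
      columnMatrix j (Aᵀ j) * columnMatrix j' (Aᵀ j') = 0 :=
    List.pairwise_reverse.mpr <| (List.pairwise_lt_finRange n).imp fun h =>
      columnMatrix_mul_columnMatrix h.le _ _
  rw [hprod, List.prod_map_one_add_of_pairwise_mul_eq_zero _ hpairwise, List.map_reverse,
    List.sum_reverse, ← Fin.sum_univ_def]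
  ext a b
  rcases lt_trichotomy a b with hab | rfl | hab
  · simp [unitriangularPart, columnMatrix, Matrix.sum_apply, ite_and, hab, hab.ne]
  · simp [unitriangularPart, columnMatrix, Matrix.sum_apply, ite_and]
  · simp [unitriangularPart, columnMatrix, Matrix.sum_apply, ite_and, hab.ne', hab.not_gt]

theorem normalForm_toGL (g : SteinbergUpper n R) :
    normalForm (toGL n R g : Matrix (Fin n) (Fin n) R) = g := by
  obtain ⟨A, rfl⟩ := exists_normalForm g
  rw [toGL_normalForm, normalForm_unitriangularPart]

end SteinbergUpper

open SteinbergUpper in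
/-- the homomorphism `St_n(R)_{α₀} → GL_n(R)` sending each generator `x_{ij}(r)`
(`i < j`) to the elementary matrix `ε_{ij}(r)` is injective with image the group `T_n(R)` of
upper unitriangular matrices; hence `St_n(R)_{α₀} ≅ T_n(R)`. -/
theorem steinbergUpper_iso_unitriangular (n : ℕ) (R : Type*) [Ring R] :
    ∃ φ : SteinbergUpper n R →* (Matrix (Fin n) (Fin n) R)ˣ,
      (∀ (p : {p : Fin n × Fin n // p ∈ ltSet n}) (r : R),
          φ (PresentedGroup.of (p, r)) = elemUnit p.1.1 p.1.2 (ne_of_lt p.2) r) ∧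
      Function.Injective φ ∧
      (φ.range : Set (Matrix (Fin n) (Fin n) R)ˣ) =
        {M | (∀ k, M.val k k = 1) ∧ ∀ k l : Fin n, l < k → M.val k l = 0} := by
  refine ⟨toGL n R, fun p r => PresentedGroup.toGroup.of _, ?_, ?_⟩
  · exact Function.LeftInverse.injective
      (g := fun M : (Matrix (Fin n) (Fin n) R)ˣ => normalForm M.val) normalForm_toGL
  · ext M
    constructor
    · rintro ⟨g, rfl⟩
      obtain ⟨A, rfl⟩ := exists_normalForm g
      refine ⟨fun k => ?_, fun k l hlk => ?_⟩ <;> rw [toGL_normalForm]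
      · simp [unitriangularPart]
      · simp [unitriangularPart, hlk.ne', hlk.not_gt]
    · rintro ⟨hdiag, hlower⟩
      exact ⟨normalForm M.val, Units.ext <| (toGL_normalForm _).trans <|
        unitriangularPart_eq_self hdiag hlower⟩
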